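/- arXiv:2108.06390 — 2 statements merged into one kernel-verified Lean document; each statement's English description precedes it below -/
import Mathlib

section
/- There is an absolute constant C > 0 such that for every integer n and every real x > 0, the Bessel function of the first kind satisfies |J_n(x)| ≤ C (1 + |n|)^{1/2} x^{-1/2}. -/
/-!
Write `J_n(x) = (2π)⁻¹ Re ∫_{-π}^{π} e^{iφ(s)} ds` with `φ(s) = n s + x sin s`. Since `φ` is odd,
it suffices to bound the integral over `[0, π]`, where `φ'' = -x sin s ≤ 0`. If `2|n| ≤ x`, the
phase has a single stationary point `t = arccos (-n/x) ∈ [π/3, 2π/3]`. A window of width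
`δ = x^{-1/2}` around `t` contributes at most `2δ`; outside it `|φ'| ≥ xδ/π`, and the first
derivative test of van der Corput bounds each of the two remaining pieces by `4π/(xδ)`. Hence
`|J_n(x)| ≤ 9 x^{-1/2}`. If instead `x < 2(1 + |n|)`, the trivial bound `|J_n(x)| ≤ 1` suffices.
-/

open Real MeasureTheory intervalIntegral Set

/-- The Bessel function of the first kind of integer order `n`, defined via the
integral representation `J_n(x) = (1/(2π)) ∫_{-π}^{π} e^{i(n s + x sin s)} ds`
(the integral is real, so we take the real part). -/
noncomputable def besselJ (n : ℤ) (x : ℝ) : ℝ :=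
  (1 / (2 * Real.pi)) *
    (∫ s in (-Real.pi)..Real.pi,
      Complex.exp (Complex.I * ((n : ℂ) * (s : ℂ) + (x : ℂ) * (Real.sin s : ℂ)))).re

theorem hasDerivAt_neg_I_mul_cexp_div {φ φ' : ℝ → ℝ} {s φ'' : ℝ} (hφ : HasDerivAt φ (φ' s) s)
    (hφ' : HasDerivAt φ' φ'' s) (hne : φ' s ≠ 0) :
    HasDerivAt (fun s => -Complex.I * Complex.exp (φ s * Complex.I) / φ' s)
      (Complex.exp (φ s * Complex.I)
        + Complex.I * Complex.exp (φ s * Complex.I) * (φ'' / φ' s ^ 2 : ℝ)) s := by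
  have hne' : (φ' s : ℂ) ≠ 0 := by exact_mod_cast hne
  refine (((hφ.ofReal_comp.mul_const Complex.I).cexp.const_mul (-Complex.I)).div
    hφ'.ofReal_comp hne').congr_deriv ?_
  push_cast
  field_simp
  ring_nf
  rw [Complex.I_sq]
  ring

theorem integral_cexp_mul_I_eq_sub_integral {φ φ' φ'' : ℝ → ℝ} {a b : ℝ}
    (hφ : ∀ s ∈ uIcc a b, HasDerivAt φ (φ' s) s)
    (hφ' : ∀ s ∈ uIcc a b, HasDerivAt φ' (φ'' s) s)
    (hφ''_cont : ContinuousOn φ'' (uIcc a b)) (hne : ∀ s ∈ uIcc a b, φ' s ≠ 0) :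
    ∫ s in a..b, Complex.exp (φ s * Complex.I) =
      (-Complex.I * Complex.exp (φ b * Complex.I) / φ' b
        - -Complex.I * Complex.exp (φ a * Complex.I) / φ' a)
      - ∫ s in a..b, Complex.I * Complex.exp (φ s * Complex.I) * (φ'' s / φ' s ^ 2 : ℝ) := by
  have hφc : ContinuousOn φ (uIcc a b) := fun s hs =>
    (hφ s hs).continuousAt.continuousWithinAt
  have hφ'c : ContinuousOn φ' (uIcc a b) := fun s hs =>
    (hφ' s hs).continuousAt.continuousWithinAt
  have he_int : IntervalIntegrable (fun s => Complex.exp (φ s * Complex.I)) volume a b :=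
    ContinuousOn.intervalIntegrable (by fun_prop)
  have hrem_int : IntervalIntegrable (fun s =>
      Complex.I * Complex.exp (φ s * Complex.I) * (φ'' s / φ' s ^ 2 : ℝ)) volume a b := by
    refine ContinuousOn.intervalIntegrable (ContinuousOn.mul (by fun_prop)
      (Complex.continuous_ofReal.comp_continuousOn ?_))
    exact hφ''_cont.div (hφ'c.pow 2) fun s hs => pow_ne_zero 2 (hne s hs)
  rw [← integral_eq_sub_of_hasDerivAt
      (fun s hs => hasDerivAt_neg_I_mul_cexp_div (hφ s hs) (hφ' s hs) (hne s hs))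
      (he_int.add hrem_int),
    integral_add he_int hrem_int, add_sub_cancel_right]

theorem norm_integral_cexp_mul_I_le_of_le_abs_deriv {φ φ' φ'' : ℝ → ℝ} {a b c : ℝ}
    (hab : a ≤ b) (hc : 0 < c)
    (hφ : ∀ s ∈ Icc a b, HasDerivAt φ (φ' s) s)
    (hφ' : ∀ s ∈ Icc a b, HasDerivAt φ' (φ'' s) s)
    (hφ''_cont : ContinuousOn φ'' (Icc a b))
    (hφ''_nonpos : ∀ s ∈ Icc a b, φ'' s ≤ 0)
    (hc_le : ∀ s ∈ Icc a b, c ≤ |φ' s|) :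
    ‖∫ s in a..b, Complex.exp (φ s * Complex.I)‖ ≤ 4 / c := by
  rw [← uIcc_of_le hab] at hφ hφ' hφ''_cont hφ''_nonpos hc_le
  have hne : ∀ s ∈ uIcc a b, φ' s ≠ 0 := fun s hs => abs_pos.mp (hc.trans_le (hc_le s hs))
  have hinv_le : ∀ s ∈ uIcc a b, |(φ' s)⁻¹| ≤ c⁻¹ := fun s hs => by
    rw [abs_inv]; exact inv_anti₀ hc (hc_le s hs)
  have he_norm : ∀ s, ‖Complex.exp (φ s * Complex.I)‖ = 1 := fun s =>
    Complex.norm_exp_ofReal_mul_I _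
  have hboundary : ∀ s ∈ uIcc a b, ‖-Complex.I * Complex.exp (φ s * Complex.I) / φ' s‖ ≤ c⁻¹ :=
    fun s hs => by
      rw [norm_div, norm_mul, norm_neg, Complex.norm_I, he_norm, Complex.norm_real, one_mul,
        Real.norm_eq_abs, one_div, ← abs_inv]
      exact hinv_le s hs
  -- as `φ'' ≤ 0`, the remainder's integrand has norm `-φ''/φ'² = (1/φ')'`
  have hrem : ‖∫ s in a..b, Complex.I * Complex.exp (φ s * Complex.I) * (φ'' s / φ' s ^ 2 : ℝ)‖
      ≤ (φ' b)⁻¹ - (φ' a)⁻¹ :=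
    calc _ ≤ ∫ s in a..b, ‖Complex.I * Complex.exp (φ s * Complex.I) * (φ'' s / φ' s ^ 2 : ℝ)‖ :=
          norm_integral_le_integral_norm hab
      _ = ∫ s in a..b, -(φ'' s / φ' s ^ 2) := integral_congr fun s hs => by
          rw [norm_mul, norm_mul, Complex.norm_I, he_norm, one_mul, one_mul, Complex.norm_real,
            Real.norm_eq_abs, abs_of_nonpos (div_nonpos_of_nonpos_of_nonneg
              (hφ''_nonpos s hs) (sq_nonneg _))]
      _ = (φ' b)⁻¹ - (φ' a)⁻¹ := by
          refine integral_eq_sub_of_hasDerivAt (fun s hs =>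
            ((hφ' s hs).inv (hne s hs)).congr_deriv (neg_div _ _)) ?_
          have hφ'c : ContinuousOn φ' (uIcc a b) := fun s hs =>
            (hφ' s hs).continuousAt.continuousWithinAt
          exact (hφ''_cont.div (hφ'c.pow 2) fun s hs => pow_ne_zero 2 (hne s hs)).neg
            |>.intervalIntegrable
  have hinv_sub : (φ' b)⁻¹ - (φ' a)⁻¹ ≤ c⁻¹ + c⁻¹ := by
    have := abs_le.mp (hinv_le a left_mem_uIcc)
    have := abs_le.mp (hinv_le b right_mem_uIcc)
    linarith
  rw [integral_cexp_mul_I_eq_sub_integral hφ hφ' hφ''_cont hne]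
  calc _ ≤ c⁻¹ + c⁻¹ + (c⁻¹ + c⁻¹) := by
        refine (norm_sub_le _ _).trans (add_le_add ((norm_sub_le _ _).trans
          (add_le_add ?_ ?_)) (hrem.trans hinv_sub))
        · exact hboundary b right_mem_uIcc
        · exact hboundary a left_mem_uIcc
    _ = 4 / c := by ring

theorem one_half_le_sin {y : ℝ} (h₁ : π / 6 ≤ y) (h₂ : y ≤ 5 * π / 6) : 1 / 2 ≤ sin y := by
  rw [← sin_pi_div_six]
  rcases le_total y (π / 2) with h | h
  · exact sin_le_sin_of_le_of_le_pi_div_two (by linarith [pi_pos]) h h₁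
  · rw [← sin_pi_sub y]
    exact sin_le_sin_of_le_of_le_pi_div_two (by linarith [pi_pos]) (by linarith) (by linarith)

theorem div_pi_le_cos_sub_cos {u v : ℝ} (huv : u ≤ v) (hvu : v - u ≤ π)
    (h₁ : π / 6 ≤ (u + v) / 2) (h₂ : (u + v) / 2 ≤ 5 * π / 6) :
    (v - u) / π ≤ cos u - cos v := by
  have hmid := one_half_le_sin h₁ h₂
  have hhalf : 2 / π * ((v - u) / 2) ≤ sin ((v - u) / 2) :=
    mul_le_sin (by linarith) (by linarith)
  rw [show 2 / π * ((v - u) / 2) = (v - u) / π by ring] at hhalf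
  have : 0 ≤ (v - u) / π := div_nonneg (by linarith) pi_pos.le
  calc (v - u) / π = 2 * (1 / 2) * ((v - u) / π) := by ring
    _ ≤ 2 * sin ((u + v) / 2) * sin ((v - u) / 2) := by gcongr
    _ = cos u - cos v := by
        rw [cos_sub_cos, show (u - v) / 2 = -((v - u) / 2) by ring, sin_neg]; ring

noncomputable def besselPhase (n : ℤ) (x s : ℝ) : ℝ := n * s + x * sin s

theorem besselJ_eq_re_integral (n : ℤ) (x : ℝ) :
    besselJ n x =
      (1 / (2 * π)) * (∫ s in -π..π, Complex.exp (besselPhase n x s * Complex.I)).re := by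
  unfold besselJ besselPhase
  push_cast
  ring_nf

theorem hasDerivAt_besselPhase (n : ℤ) (x s : ℝ) :
    HasDerivAt (besselPhase n x) (n + x * cos s) s := by
  have := ((hasDerivAt_id s).const_mul (n : ℝ)).add ((hasDerivAt_sin s).const_mul x)
  simp only [mul_one] at this
  exact this

theorem intervalIntegrable_exp_besselPhase (n : ℤ) (x a b : ℝ) :
    IntervalIntegrable (fun s => Complex.exp (besselPhase n x s * Complex.I)) volume a b :=
  Continuous.intervalIntegrable (by unfold besselPhase; fun_prop) a b

theorem norm_integral_exp_besselPhase_le {n : ℤ} {x a b c : ℝ} (hx : 0 ≤ x) (ha : 0 ≤ a)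
    (hab : a ≤ b) (hb : b ≤ π) (hc : 0 < c) (hc_le : ∀ s ∈ Icc a b, c ≤ |n + x * cos s|) :
    ‖∫ s in a..b, Complex.exp (besselPhase n x s * Complex.I)‖ ≤ 4 / c :=
  norm_integral_cexp_mul_I_le_of_le_abs_deriv hab hc
    (fun s _ => hasDerivAt_besselPhase n x s)
    (fun s _ => by simpa using ((hasDerivAt_cos s).const_mul x).const_add (n : ℝ))
    (by fun_prop)
    (fun s hs => neg_nonpos.mpr (mul_nonneg hx (sin_nonneg_of_nonneg_of_le_pi
      (ha.trans hs.1) (hs.2.trans hb))))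
    hc_le

theorem norm_integral_exp_besselPhase_zero_pi_le {n : ℤ} {x t δ : ℝ} (hx : 0 < x)
    (hδ : 0 < δ) (hδ₁ : δ ≤ 1) (ht : x * cos t = -n) (ht₁ : π / 3 ≤ t) (ht₂ : t ≤ 2 * π / 3) :
    ‖∫ s in (0 : ℝ)..π, Complex.exp (besselPhase n x s * Complex.I)‖
      ≤ 8 * π / (x * δ) + 2 * δ := by
  have hπ : 3 < π := pi_gt_three
  have hc : 0 < x * δ / π := by positivity
  have hleft : ∀ s ∈ Icc 0 (t - δ), x * δ / π ≤ |n + x * cos s| := fun s hs => by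
    have hgap := div_pi_le_cos_sub_cos (u := t - δ) (v := t) (by linarith) (by linarith)
      (by linarith) (by linarith)
    have hcos := cos_le_cos_of_nonneg_of_le_pi hs.1 (by linarith) hs.2
    calc x * δ / π = x * ((t - (t - δ)) / π) := by ring
      _ ≤ x * (cos s - cos t) := by gcongr; linarith
      _ ≤ |(n : ℝ) + x * cos s| := by linarith [le_abs_self ((n : ℝ) + x * cos s)]
  have hright : ∀ s ∈ Icc (t + δ) π, x * δ / π ≤ |n + x * cos s| := fun s hs => by
    have hgap := div_pi_le_cos_sub_cos (u := t) (v := t + δ) (by linarith) (by linarith)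
      (by linarith) (by linarith)
    have hcos := cos_le_cos_of_nonneg_of_le_pi (by linarith) hs.2 hs.1
    calc x * δ / π = x * ((t + δ - t) / π) := by ring
      _ ≤ x * (cos t - cos s) := by gcongr; linarith
      _ ≤ |(n : ℝ) + x * cos s| := by linarith [neg_abs_le ((n : ℝ) + x * cos s)]
  have hmiddle : ‖∫ s in (t - δ)..(t + δ), Complex.exp (besselPhase n x s * Complex.I)‖
      ≤ 2 * δ := by
    refine (norm_integral_le_of_norm_le_const fun s _ =>
      (Complex.norm_exp_ofReal_mul_I _).le).trans_eq ?_
    rw [abs_of_pos (by linarith)]; ring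
  have hint := intervalIntegrable_exp_besselPhase n x
  rw [← integral_add_adjacent_intervals (hint 0 (t - δ)) (hint (t - δ) π),
    ← integral_add_adjacent_intervals (hint (t - δ) (t + δ)) (hint (t + δ) π)]
  calc _ ≤ 4 / (x * δ / π) + (2 * δ + 4 / (x * δ / π)) := by
        refine (norm_add_le _ _).trans (add_le_add ?_ ((norm_add_le _ _).trans
          (add_le_add hmiddle ?_)))
        · exact norm_integral_exp_besselPhase_le hx.le le_rfl (by linarith) (by linarith) hc
            hleft
        · exact norm_integral_exp_besselPhase_le hx.le (by linarith) (by linarith) le_rfl hc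
            hright
    _ = 8 * π / (x * δ) + 2 * δ := by field_simp; ring

theorem besselPhase_neg (n : ℤ) (x s : ℝ) : besselPhase n x (-s) = -besselPhase n x s := by
  simp only [besselPhase, sin_neg]; ring

theorem norm_integral_exp_besselPhase_le_two_mul (n : ℤ) (x : ℝ) :
    ‖∫ s in -π..π, Complex.exp (besselPhase n x s * Complex.I)‖
      ≤ 2 * ‖∫ s in (0 : ℝ)..π, Complex.exp (besselPhase n x s * Complex.I)‖ := by
  have hint := intervalIntegrable_exp_besselPhase n x
  have hreflect : ∫ s in -π..0, Complex.exp (besselPhase n x s * Complex.I)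
      = (starRingEnd ℂ) (∫ s in (0 : ℝ)..π, Complex.exp (besselPhase n x s * Complex.I)) := by
    rw [← intervalIntegral_conj (𝕜 := ℂ), ← neg_zero, ← integral_comp_neg
      (fun s => Complex.exp (besselPhase n x s * Complex.I)), neg_zero]
    refine integral_congr fun s _ => ?_
    rw [besselPhase_neg, ← Complex.exp_conj, map_mul, Complex.conj_ofReal, Complex.conj_I,
      Complex.ofReal_neg, neg_mul, mul_neg]
  rw [← integral_add_adjacent_intervals (hint (-π) 0) (hint 0 π), hreflect]
  refine (norm_add_le _ _).trans_eq ?_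
  rw [RCLike.norm_conj]; ring

theorem abs_besselJ_le_norm_integral (n : ℤ) (x : ℝ) :
    |besselJ n x| ≤ ‖∫ s in -π..π, Complex.exp (besselPhase n x s * Complex.I)‖ / (2 * π) := by
  rw [besselJ_eq_re_integral, abs_mul, abs_of_pos (by positivity), one_div_mul_eq_div]
  gcongr
  exact Complex.abs_re_le_norm _

theorem abs_besselJ_le_one (n : ℤ) (x : ℝ) : |besselJ n x| ≤ 1 := by
  refine (abs_besselJ_le_norm_integral n x).trans ?_
  rw [div_le_one (by positivity)]
  refine (norm_integral_le_of_norm_le_const fun s _ =>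
    (Complex.norm_exp_ofReal_mul_I _).le).trans_eq ?_
  rw [abs_of_pos (by linarith [pi_pos])]; ring

theorem abs_besselJ_le_of_two_mul_abs_le {n : ℤ} {x : ℝ} (hx : 1 ≤ x) (hn : 2 * |(n : ℝ)| ≤ x) :
    |besselJ n x| ≤ 9 / √x := by
  have hx₀ : 0 < x := by linarith
  have hn' : |-(n : ℝ) / x| ≤ 1 / 2 := by
    rw [abs_div, abs_neg, abs_of_pos hx₀, div_le_iff₀ hx₀]; linarith
  obtain ⟨hn₁, hn₂⟩ := abs_le.mp hn'
  have harccos_half : arccos (1 / 2) = π / 3 :=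
    arccos_eq_of_eq_cos (by positivity) (by linarith [pi_pos]) cos_pi_div_three.symm
  have ht : x * cos (arccos (-n / x)) = -n := by
    rw [cos_arccos (by linarith) (by linarith)]; field_simp
  have ht₁ : π / 3 ≤ arccos (-n / x) := harccos_half ▸ arccos_le_arccos hn₂
  have ht₂ : arccos (-n / x) ≤ 2 * π / 3 := by
    have := arccos_le_arccos hn₁
    rw [arccos_neg, harccos_half] at this; linarith
  have hsqrt : 1 ≤ √x := one_le_sqrt.mpr hx
  have hxδ : x * (√x)⁻¹ = √x := by rw [← div_eq_mul_inv, div_sqrt]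
  have hhalf := norm_integral_exp_besselPhase_zero_pi_le hx₀ (by positivity)
    (inv_le_one_of_one_le₀ hsqrt) ht ht₁ ht₂
  rw [hxδ] at hhalf
  have hπ : 3 < π := pi_gt_three
  calc |besselJ n x|
      ≤ 2 * (8 * π / √x + 2 * (√x)⁻¹) / (2 * π) := by
        refine (abs_besselJ_le_norm_integral n x).trans ?_
        gcongr
        exact (norm_integral_exp_besselPhase_le_two_mul n x).trans (by gcongr)
    _ = (8 + 2 / π) / √x := by field_simp
    _ ≤ 9 / √x := by
        gcongr
        linarith [(div_le_one (by positivity)).mpr (by linarith : 2 ≤ π)]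

/-- There is an absolute constant `C > 0` such that for every integer `n` and every
real `x > 0`, `|J_n(x)| ≤ C (1 + |n|)^{1/2} x^{-1/2}`. -/
theorem besselJ_decay :
    ∃ C : ℝ, 0 < C ∧ ∀ (n : ℤ) (x : ℝ), 0 < x →
      |besselJ n x| ≤ C * (1 + |(n : ℝ)|) ^ ((1 : ℝ) / 2) * x ^ (-(1 : ℝ) / 2) := by
  refine ⟨9, by norm_num, fun n x hx => ?_⟩
  rw [← sqrt_eq_rpow, neg_div, rpow_neg hx.le, ← sqrt_eq_rpow, ← div_eq_mul_inv]
  have hsqrt_n : 1 ≤ √(1 + |(n : ℝ)|) := one_le_sqrt.mpr (by linarith [abs_nonneg (n : ℝ)])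
  rcases le_or_gt x (2 * (1 + |(n : ℝ)|)) with hsmall | hlarge
  · have : √x ≤ 9 * √(1 + |(n : ℝ)|) := by
      rw [sqrt_le_left (by positivity), mul_pow, sq_sqrt (by positivity)]
      linarith [abs_nonneg (n : ℝ)]
    refine (abs_besselJ_le_one n x).trans ?_
    rw [le_div_iff₀ (sqrt_pos.mpr hx)]
    linarith
  · calc |besselJ n x| ≤ 9 / √x :=
          abs_besselJ_le_of_two_mul_abs_le (by linarith [abs_nonneg (n : ℝ)]) (by linarith)
      _ ≤ 9 * √(1 + |(n : ℝ)|) / √x := by gcongr; linarith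
end

section
/- There exist absolute constants ε₀ > 0 such that the following holds. Let λ > 0 and let V : ℝ³ → ℝ be measurable with a decomposition V = V₁ + V₂ where V₁ is bounded, measurable and supported in a ball of radius R, and sup_{x∈ℝ³} ∫_{ℝ³} |V₂(y)| / ‖x − y‖ dy ≤ ε₀. Suppose ψ : ℝ³ → ℂ is bounded and measurable and satisfies, for almost every x, ψ(x) = −(1/(4π)) ∫_{ℝ³} ( e^{−λ‖x−y‖} / ‖x − y‖ ) V(y) ψ(y) dy. Then there exists a constant C > 0 (depending on λ, R, ‖V₁‖_∞ and ‖ψ‖_∞) such that |ψ(x)| ≤ C (1 + ‖x‖)^{−1} e^{−λ‖x‖} for almost every x ∈ ℝ³. (Sharp Agmon estimate: an L^∞ eigenfunction of −Δ + V with eigenvalue −λ², expressed via the resolvent equation ψ = −R₀(−λ²)Vψ, decays like ⟨x⟩^{−1} e^{−λ|x|}.) -/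
/-!
Multiply the resolvent equation by the truncated weight `w_N(x) = min ((1 + |x|) e^{λ|x|}) N`.
Since `|x| ≤ |y| + |x - y|`, the weight passes through the kernel at the price of a second
singularity at the origin: `w_N(x) e^{-λ|x-y|} / |x-y| ≤ w_N(y) (|x-y|⁻¹ + |y|⁻¹)`. Hence
`w_N |ψ| ≤ (4π)⁻¹ ∫ (|x-y|⁻¹ + |y|⁻¹) |V(y)| w_N(y) |ψ(y)| dy`, and the two Kato integrals (at `x`
and at `0`) control the right-hand side. On the support of `V₁` the weight is at most its value at
`R`, and `V₁` has finite Kato norm because `|z|⁻¹` is locally integrable in dimension `3`; the `V₂`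
part is at most `2ε₀ / (4π)` times `A_N = ess sup w_N |ψ|`. As `A_N ≤ N ‖ψ‖_∞` is finite it can be
absorbed, so `A_N` is bounded independently of `N`, and letting `N → ∞` gives the estimate.
-/

open MeasureTheory Metric
open scoped ENNReal

noncomputable def agmonWeight (lam r : ℝ) : ℝ := (1 + r) * Real.exp (lam * r)

section Weight

variable {lam : ℝ}

theorem agmonWeight_pos {r : ℝ} (hr : 0 ≤ r) : 0 < agmonWeight lam r := by
  unfold agmonWeight; positivity

theorem agmonWeight_le_agmonWeight (hlam : 0 ≤ lam) {r s : ℝ} (hr : 0 ≤ r) (hrs : r ≤ s) :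
    agmonWeight lam r ≤ agmonWeight lam s :=
  mul_le_mul (by linarith) (Real.exp_le_exp.2 (mul_le_mul_of_nonneg_left hrs hlam))
    (Real.exp_pos _).le (by linarith)

theorem inv_agmonWeight (r : ℝ) : (agmonWeight lam r)⁻¹ = (1 + r)⁻¹ * Real.exp (-lam * r) := by
  rw [agmonWeight, mul_inv, neg_mul, Real.exp_neg]

theorem agmonWeight_mul_exp_div_le (hlam : 0 ≤ lam) {a b d : ℝ} (hb : 0 < b)
    (hd : 0 ≤ d) (habd : a ≤ b + d) :
    agmonWeight lam a * (Real.exp (-lam * d) / d) ≤ agmonWeight lam b * (d⁻¹ + b⁻¹) := by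
  rcases hd.eq_or_lt with rfl | hd
  · simp only [div_zero, mul_zero]
    exact mul_nonneg (agmonWeight_pos hb.le).le (by positivity)
  have hexp : Real.exp (lam * a) * Real.exp (-lam * d) ≤ Real.exp (lam * b) := by
    rw [← Real.exp_add]
    exact Real.exp_le_exp.2 (by nlinarith)
  have hpoly : (1 + a) / d ≤ (1 + b) * (d⁻¹ + b⁻¹) := by
    rw [div_le_iff₀ hd]
    field_simp
    nlinarith
  calc agmonWeight lam a * (Real.exp (-lam * d) / d)
      = (1 + a) / d * (Real.exp (lam * a) * Real.exp (-lam * d)) := by unfold agmonWeight; ring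
    _ ≤ (1 + b) * (d⁻¹ + b⁻¹) * Real.exp (lam * b) :=
        mul_le_mul hpoly hexp (by positivity) (by positivity)
    _ = agmonWeight lam b * (d⁻¹ + b⁻¹) := by unfold agmonWeight; ring

end Weight

theorem min_mul_le_min_mul {u v c m N : ℝ} (hN : 0 ≤ N) (hc : 0 ≤ c) (hcm : c ≤ m)
    (h : u * c ≤ v * m) : min u N * c ≤ min v N * m := by
  rcases le_total v N with hv | hv
  · rw [min_eq_left hv]
    exact (mul_le_mul_of_nonneg_right (min_le_left u N) hc).trans h
  · rw [min_eq_right hv]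
    exact (mul_le_mul_of_nonneg_right (min_le_right u N) hc).trans
      (mul_le_mul_of_nonneg_left hcm hN)

theorem ENNReal.le_two_mul_of_le_add_inv_two_mul {a b : ℝ≥0∞} (ha : a ≠ ⊤)
    (h : a ≤ b + 2⁻¹ * a) : a ≤ 2 * b := by
  have hhalf : a / 2 ≤ b := by
    rw [← ENNReal.add_le_add_iff_right (ENNReal.div_ne_top ha two_ne_zero), ENNReal.add_halves]
    rwa [ENNReal.div_eq_inv_mul]
  calc a = 2 * (a / 2) := (ENNReal.mul_div_cancel two_ne_zero ENNReal.ofNat_ne_top).symm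
    _ ≤ 2 * b := by gcongr

theorem ae_mul_le_of_forall_essSup_min_mul_le {α : Type*} [MeasurableSpace α] {μ : Measure α}
    {w g : α → ℝ} {C : ℝ≥0∞}
    (h : ∀ n : ℕ, essSup (fun x => ENNReal.ofReal (min (w x) n * g x)) μ ≤ C) :
    ∀ᵐ x ∂μ, ENNReal.ofReal (w x * g x) ≤ C := by
  have hall : ∀ᵐ x ∂μ, ∀ n : ℕ, ENNReal.ofReal (min (w x) n * g x) ≤ C :=
    ae_all_iff.2 fun n => (ENNReal.ae_le_essSup _).mono fun x hx => hx.trans (h n)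
  filter_upwards [hall] with x hx
  simpa only [min_eq_left (Nat.le_ceil (w x))] using hx ⌈w x⌉₊

section Kernel

variable {E : Type*} [NormedAddCommGroup E] {lam : ℝ}

theorem min_agmonWeight_mul_yukawa_le (hlam : 0 ≤ lam) {N : ℝ} (hN : 0 ≤ N) (x : E) {y : E}
    (hy : y ≠ 0) :
    min (agmonWeight lam ‖x‖) N * (Real.exp (-lam * ‖x - y‖) / ‖x - y‖)
      ≤ min (agmonWeight lam ‖y‖) N * (‖x - y‖⁻¹ + ‖y‖⁻¹) := by
  refine min_mul_le_min_mul hN (by positivity) ?_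
    (agmonWeight_mul_exp_div_le hlam (norm_pos_iff.2 hy) (norm_nonneg _)
      (norm_le_norm_add_norm_sub' x y))
  calc Real.exp (-lam * ‖x - y‖) / ‖x - y‖ ≤ 1 / ‖x - y‖ := by
        gcongr
        exact Real.exp_le_one_iff.2 (by nlinarith [norm_nonneg (x - y)])
    _ ≤ ‖x - y‖⁻¹ + ‖y‖⁻¹ := by rw [one_div]; exact le_add_of_nonneg_right (by positivity)

end Kernel

section Kato

variable {E : Type*} [NormedAddCommGroup E] [MeasurableSpace E] [BorelSpace E] {μ : Measure E}

theorem lintegral_inv_dist_add_inv_norm_mul_le {f : E → ℝ} (hf : Measurable f) {k : ℝ≥0∞}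
    (hk : ∀ x, ∫⁻ y, ENNReal.ofReal (|f y| / ‖x - y‖) ∂μ ≤ k) (x : E) :
    ∫⁻ y, ENNReal.ofReal ((‖x - y‖⁻¹ + ‖y‖⁻¹) * |f y|) ∂μ ≤ 2 * k := by
  have hsplit : ∀ y, ENNReal.ofReal ((‖x - y‖⁻¹ + ‖y‖⁻¹) * |f y|)
      = ENNReal.ofReal (|f y| / ‖x - y‖) + ENNReal.ofReal (|f y| / ‖0 - y‖) := by
    intro y
    rw [← ENNReal.ofReal_add (by positivity) (by positivity), zero_sub, norm_neg]
    ring_nf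
  simp_rw [hsplit]
  rw [lintegral_add_left (by fun_prop), two_mul]
  exact add_le_add (hk x) (hk 0)

theorem lintegral_mul_le_of_kato_bound {V₁ V₂ : E → ℝ} (hV₁ : Measurable V₁) (hV₂ : Measurable V₂)
    {k₁ k₂ : ℝ≥0∞} (hk₁ : ∀ x, ∫⁻ y, ENNReal.ofReal (|V₁ y| / ‖x - y‖) ∂μ ≤ k₁)
    (hk₂ : ∀ x, ∫⁻ y, ENNReal.ofReal (|V₂ y| / ‖x - y‖) ∂μ ≤ k₂)
    {u : E → ℝ≥0∞} {a b : ℝ≥0∞} (ha : ∀ y, V₁ y ≠ 0 → u y ≤ a) (hb : ∀ᵐ y ∂μ, u y ≤ b) (x : E) :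
    ∫⁻ y, ENNReal.ofReal ((‖x - y‖⁻¹ + ‖y‖⁻¹) * |V₁ y + V₂ y|) * u y ∂μ
      ≤ 2 * k₁ * a + 2 * k₂ * b := by
  set T : E → ℝ := fun y => ‖x - y‖⁻¹ + ‖y‖⁻¹
  calc ∫⁻ y, ENNReal.ofReal (T y * |V₁ y + V₂ y|) * u y ∂μ
      ≤ ∫⁻ y, (ENNReal.ofReal (T y * |V₁ y|) * a + ENNReal.ofReal (T y * |V₂ y|) * b) ∂μ := by
        refine lintegral_mono_ae (hb.mono fun y hy => ?_)
        have hT : 0 ≤ T y := by positivity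
        calc ENNReal.ofReal (T y * |V₁ y + V₂ y|) * u y
            ≤ (ENNReal.ofReal (T y * |V₁ y|) + ENNReal.ofReal (T y * |V₂ y|)) * u y := by
              rw [← ENNReal.ofReal_add (by positivity) (by positivity), ← mul_add]
              gcongr
              exact abs_add_le _ _
          _ ≤ _ := by
              rw [add_mul]
              refine add_le_add ?_ (by gcongr)
              by_cases h : V₁ y = 0
              · simp [h]
              · gcongr
                exact ha y h
    _ = (∫⁻ y, ENNReal.ofReal (T y * |V₁ y|) ∂μ) * a
          + (∫⁻ y, ENNReal.ofReal (T y * |V₂ y|) ∂μ) * b := by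
        rw [lintegral_add_left (by fun_prop), lintegral_mul_const _ (by fun_prop),
          lintegral_mul_const _ (by fun_prop)]
    _ ≤ 2 * k₁ * a + 2 * k₂ * b := by
        gcongr
        · exact lintegral_inv_dist_add_inv_norm_mul_le hV₁ hk₁ x
        · exact lintegral_inv_dist_add_inv_norm_mul_le hV₂ hk₂ x

theorem setLIntegral_inv_dist_le [μ.IsAddRightInvariant] (s : Set E) (x : E) :
    ∫⁻ y in s, ENNReal.ofReal ‖x - y‖⁻¹ ∂μ
      ≤ ∫⁻ z in closedBall (0 : E) 1, ENNReal.ofReal ‖z‖⁻¹ ∂μ + μ s := by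
  set g : E → ℝ≥0∞ := (closedBall (0 : E) 1).indicator fun z => ENNReal.ofReal ‖z‖⁻¹
  have hpt : ∀ y, ENNReal.ofReal ‖x - y‖⁻¹ ≤ g (y - x) + 1 := by
    intro y
    by_cases hy : ‖y - x‖ ≤ 1
    · rw [show g (y - x) = ENNReal.ofReal ‖y - x‖⁻¹ from
        Set.indicator_of_mem (mem_closedBall_zero_iff.2 hy) _, norm_sub_rev]
      exact le_self_add
    · refine le_add_left (ENNReal.ofReal_le_one.2 ?_)
      rw [norm_sub_rev]
      exact inv_le_one_of_one_le₀ (not_le.1 hy).le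
  calc ∫⁻ y in s, ENNReal.ofReal ‖x - y‖⁻¹ ∂μ
      ≤ ∫⁻ y in s, (g (y - x) + 1) ∂μ := lintegral_mono hpt
    _ = ∫⁻ y in s, g (y - x) ∂μ + μ s := by
        rw [lintegral_add_right _ measurable_const, setLIntegral_one]
    _ ≤ ∫⁻ y, g (y - x) ∂μ + μ s := add_le_add_left (setLIntegral_le_lintegral _ _) _
    _ = ∫⁻ z in closedBall (0 : E) 1, ENNReal.ofReal ‖z‖⁻¹ ∂μ + μ s := by
        rw [lintegral_sub_right_eq_self g x, lintegral_indicator measurableSet_closedBall]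

end Kato

section Haar

variable {E : Type*} [NormedAddCommGroup E] [NormedSpace ℝ E] [FiniteDimensional ℝ E]
  [MeasurableSpace E] [BorelSpace E] {μ : Measure E} [μ.IsAddHaarMeasure]

theorem lintegral_closedBall_inv_norm_lt_top (hE : 1 < Module.finrank ℝ E) (r : ℝ) :
    ∫⁻ z in closedBall (0 : E) r, ENNReal.ofReal ‖z‖⁻¹ ∂μ < ⊤ := by
  have hloc : LocallyIntegrable (fun z : E => ‖z‖⁻¹) μ :=
    locallyIntegrable_of_norm_le_rpow (C := 1) (α := 1) hE.le (by exact_mod_cast hE)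
      (ae_of_all _ fun z => by simp [Real.rpow_neg_one])
      measurable_norm.inv.aestronglyMeasurable
  exact (hloc.integrableOn_isCompact (isCompact_closedBall 0 r)).lintegral_lt_top

theorem exists_kato_bound_of_abs_le (hE : 1 < Module.finrank ℝ E) {f : E → ℝ} {M : ℝ}
    {s : Set E} (hf : ∀ y, |f y| ≤ M) (hs : Function.support f ⊆ s) (hμs : μ s ≠ ⊤) :
    ∃ k ≠ ⊤, ∀ x, ∫⁻ y, ENNReal.ofReal (|f y| / ‖x - y‖) ∂μ ≤ k := by
  set I := ∫⁻ z in closedBall (0 : E) 1, ENNReal.ofReal ‖z‖⁻¹ ∂μ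
  have hM : 0 ≤ M := (abs_nonneg _).trans (hf 0)
  refine ⟨ENNReal.ofReal M * (I + μ s), ENNReal.mul_ne_top ENNReal.ofReal_ne_top
    (ENNReal.add_ne_top.2 ⟨(lintegral_closedBall_inv_norm_lt_top hE 1).ne, hμs⟩), fun x => ?_⟩
  have hsupp : Function.support (fun y => ENNReal.ofReal (|f y| / ‖x - y‖)) ⊆ s := by
    refine Function.support_subset_iff'.2 fun y hy => ?_
    simp [Function.notMem_support.1 fun h => hy (hs h)]
  calc ∫⁻ y, ENNReal.ofReal (|f y| / ‖x - y‖) ∂μ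
      = ∫⁻ y in s, ENNReal.ofReal (|f y| / ‖x - y‖) ∂μ :=
        (setLIntegral_eq_of_support_subset hsupp).symm
    _ ≤ ∫⁻ y in s, ENNReal.ofReal M * ENNReal.ofReal ‖x - y‖⁻¹ ∂μ := by
        refine lintegral_mono fun y => ?_
        rw [← ENNReal.ofReal_mul hM, div_eq_mul_inv]
        gcongr
        exact hf y
    _ ≤ ENNReal.ofReal M * (I + μ s) := by
        rw [lintegral_const_mul' _ _ ENNReal.ofReal_ne_top]
        gcongr
        exact setLIntegral_inv_dist_le s x

end Haar

theorem ofReal_norm_le_of_eq_neg_mul_integral {α : Type*} [MeasurableSpace α] {μ : Measure α}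
    {c : ℝ} (hc : 0 ≤ c) {z : ℂ} {g : α → ℝ} {ψ : α → ℂ}
    (h : z = -(c : ℂ) * ∫ y, (g y : ℂ) * ψ y ∂μ) :
    ENNReal.ofReal ‖z‖ ≤ ENNReal.ofReal c * ∫⁻ y, ENNReal.ofReal (|g y| * ‖ψ y‖) ∂μ := by
  have hint := norm_integral_le_lintegral_norm (μ := μ) fun y => (g y : ℂ) * ψ y
  rw [h, norm_mul, norm_neg, Complex.norm_real, Real.norm_of_nonneg hc, ENNReal.ofReal_mul hc]
  gcongr
  refine (ENNReal.ofReal_le_ofReal hint).trans (ENNReal.ofReal_toReal_le.trans_eq ?_)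
  simp

section Resolvent

variable {E : Type*} [NormedAddCommGroup E] [MeasurableSpace E] {μ : Measure E}
  [NullSingletonClass μ] {lam c : ℝ} {ψ : E → ℂ}

theorem ae_ofReal_min_agmonWeight_mul_norm_le {V : E → ℝ} (hlam : 0 ≤ lam) (hc : 0 ≤ c)
    (heq : ∀ᵐ x ∂μ, ψ x = -(c : ℂ) *
      ∫ y, ((Real.exp (-lam * ‖x - y‖) / ‖x - y‖ * V y : ℝ) : ℂ) * ψ y ∂μ)
    {N : ℝ} (hN : 0 ≤ N) :
    ∀ᵐ x ∂μ, ENNReal.ofReal (min (agmonWeight lam ‖x‖) N * ‖ψ x‖)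
      ≤ ENNReal.ofReal c * ∫⁻ y, ENNReal.ofReal ((‖x - y‖⁻¹ + ‖y‖⁻¹) * |V y|)
          * ENNReal.ofReal (min (agmonWeight lam ‖y‖) N * ‖ψ y‖) ∂μ := by
  have hy0 : ∀ᵐ y ∂μ, y ≠ 0 := compl_mem_ae_iff.2 (measure_singleton 0)
  filter_upwards [heq] with x hx
  set w : E → ℝ := fun z => min (agmonWeight lam ‖z‖) N
  have hw : ∀ z, 0 ≤ w z := fun z => le_min (agmonWeight_pos (norm_nonneg z)).le hN
  set K : E → ℝ := fun y => Real.exp (-lam * ‖x - y‖) / ‖x - y‖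
  calc ENNReal.ofReal (w x * ‖ψ x‖) = ENNReal.ofReal (w x) * ENNReal.ofReal ‖ψ x‖ :=
        ENNReal.ofReal_mul (hw x)
    _ ≤ ENNReal.ofReal (w x) *
          (ENNReal.ofReal c * ∫⁻ y, ENNReal.ofReal (|K y * V y| * ‖ψ y‖) ∂μ) := by
        gcongr
        exact ofReal_norm_le_of_eq_neg_mul_integral hc hx
    _ = ENNReal.ofReal c * ∫⁻ y, ENNReal.ofReal (w x * (|K y * V y| * ‖ψ y‖)) ∂μ := by
        rw [mul_left_comm, ← lintegral_const_mul' _ _ ENNReal.ofReal_ne_top]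
        simp_rw [ENNReal.ofReal_mul (hw x)]
    _ ≤ _ := by
        gcongr ENNReal.ofReal c * ?_
        refine lintegral_mono_ae (hy0.mono fun y hy => ?_)
        rw [← ENNReal.ofReal_mul (by positivity)]
        apply ENNReal.ofReal_le_ofReal
        have hK : 0 ≤ K y := by positivity
        calc w x * (|K y * V y| * ‖ψ y‖) = w x * K y * (|V y| * ‖ψ y‖) := by
              rw [abs_mul, abs_of_nonneg hK]; ring
          _ ≤ w y * (‖x - y‖⁻¹ + ‖y‖⁻¹) * (|V y| * ‖ψ y‖) :=
              mul_le_mul_of_nonneg_right (min_agmonWeight_mul_yukawa_le hlam hN x hy)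
                (by positivity)
          _ = (‖x - y‖⁻¹ + ‖y‖⁻¹) * |V y| * (w y * ‖ψ y‖) := by ring

theorem essSup_min_agmonWeight_mul_norm_le [BorelSpace E] {ε M R : ℝ} {V₁ V₂ : E → ℝ}
    {k₁ : ℝ≥0∞}
    (hlam : 0 ≤ lam) (hc : 0 ≤ c) (hcε : 4 * c * ε ≤ 1)
    (hV₁ : Measurable V₁) (hV₂ : Measurable V₂)
    (hk₁ : ∀ x, ∫⁻ y, ENNReal.ofReal (|V₁ y| / ‖x - y‖) ∂μ ≤ k₁)
    (hk₂ : ∀ x, ∫⁻ y, ENNReal.ofReal (|V₂ y| / ‖x - y‖) ∂μ ≤ ENNReal.ofReal ε)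
    (hsupp : Function.support V₁ ⊆ closedBall 0 R) (hψ : ∀ x, ‖ψ x‖ ≤ M)
    (heq : ∀ᵐ x ∂μ, ψ x = -(c : ℂ) *
      ∫ y, ((Real.exp (-lam * ‖x - y‖) / ‖x - y‖ * (V₁ + V₂) y : ℝ) : ℂ) * ψ y ∂μ)
    {N : ℝ} (hN : 0 ≤ N) :
    essSup (fun x => ENNReal.ofReal (min (agmonWeight lam ‖x‖) N * ‖ψ x‖)) μ
      ≤ 4 * ENNReal.ofReal c * k₁ * ENNReal.ofReal (agmonWeight lam R * M) := by
  set A := essSup (fun x => ENNReal.ofReal (min (agmonWeight lam ‖x‖) N * ‖ψ x‖)) μ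
  set a := ENNReal.ofReal (agmonWeight lam R * M)
  have hA : A ≠ ⊤ := ne_top_of_le_ne_top ENNReal.ofReal_ne_top <| essSup_le_of_ae_le _ <|
    ae_of_all _ fun x => ENNReal.ofReal_le_ofReal <|
      mul_le_mul (min_le_right _ _) (hψ x) (norm_nonneg _) hN
  have hsupp_le : ∀ y, V₁ y ≠ 0 → ENNReal.ofReal (min (agmonWeight lam ‖y‖) N * ‖ψ y‖) ≤ a := by
    intro y hy
    have hyR : ‖y‖ ≤ R := by simpa using hsupp hy
    refine ENNReal.ofReal_le_ofReal (mul_le_mul ?_ (hψ y) (norm_nonneg _)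
      (agmonWeight_pos ((norm_nonneg y).trans hyR)).le)
    exact (min_le_left _ _).trans (agmonWeight_le_agmonWeight hlam (norm_nonneg y) hyR)
  have hcε' : ENNReal.ofReal c * (2 * ENNReal.ofReal ε) ≤ 2⁻¹ := by
    rw [mul_left_comm, ← ENNReal.ofReal_mul hc, ← ENNReal.ofReal_ofNat 2,
      ← ENNReal.ofReal_mul zero_le_two, ← ENNReal.ofReal_inv_of_pos two_pos]
    exact ENNReal.ofReal_le_ofReal (by linarith)
  have hA_le : A ≤ 2 * ENNReal.ofReal c * k₁ * a + 2⁻¹ * A := by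
    refine essSup_le_of_ae_le _ ((ae_ofReal_min_agmonWeight_mul_norm_le hlam hc heq hN).mono
      fun x hx => hx.trans ?_)
    calc _ ≤ ENNReal.ofReal c * (2 * k₁ * a + 2 * ENNReal.ofReal ε * A) := by
          gcongr
          exact lintegral_mul_le_of_kato_bound hV₁ hV₂ hk₁ hk₂ hsupp_le (ENNReal.ae_le_essSup _) x
      _ = 2 * ENNReal.ofReal c * k₁ * a + ENNReal.ofReal c * (2 * ENNReal.ofReal ε) * A := by
          ring
      _ ≤ 2 * ENNReal.ofReal c * k₁ * a + 2⁻¹ * A := by gcongr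
  calc A ≤ 2 * (2 * ENNReal.ofReal c * k₁ * a) :=
        ENNReal.le_two_mul_of_le_add_inv_two_mul hA hA_le
    _ = 4 * ENNReal.ofReal c * k₁ * a := by ring

end Resolvent

/-- Sharp Agmon estimate: there is an absolute smallness constant `ε₀ > 0` such that
any bounded measurable solution `ψ` of the resolvent equation
`ψ = −R₀(−λ²) V ψ` (with `R₀(−λ²)` the free resolvent kernel `e^{−λ|x−y|}/(4π|x−y|)`
on `ℝ³`), where `V = V₁ + V₂` with `V₁` bounded and compactly supported and `V₂`
small in the global Kato norm, obeys `|ψ(x)| ≤ C ⟨x⟩⁻¹ e^{−λ|x|}` almost everywhere. -/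
theorem sharp_agmon_estimate :
    ∃ ε₀ : ℝ, 0 < ε₀ ∧
      ∀ (lam R M₁ Mψ : ℝ) (V V₁ V₂ : EuclideanSpace ℝ (Fin 3) → ℝ)
        (ψ : EuclideanSpace ℝ (Fin 3) → ℂ),
        0 < lam →
        V = V₁ + V₂ →
        Measurable V₁ → Measurable V₂ →
        (∀ x, |V₁ x| ≤ M₁) →
        Function.support V₁ ⊆ Metric.closedBall 0 R →
        (∀ x, ∫⁻ y, ENNReal.ofReal (|V₂ y| / ‖x - y‖) ≤ ENNReal.ofReal ε₀) →
        Measurable ψ →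
        (∀ x, ‖ψ x‖ ≤ Mψ) →
        (∀ᵐ x ∂(volume : Measure (EuclideanSpace ℝ (Fin 3))),
          ψ x = -((1 / (4 * Real.pi) : ℝ) : ℂ) *
            ∫ y, ((Real.exp (-lam * ‖x - y‖) / ‖x - y‖ * V y : ℝ) : ℂ) * ψ y) →
        ∃ C : ℝ, 0 < C ∧
          ∀ᵐ x ∂(volume : Measure (EuclideanSpace ℝ (Fin 3))),
            ‖ψ x‖ ≤ C * (1 + ‖x‖)⁻¹ * Real.exp (-lam * ‖x‖) := by
  refine ⟨1, one_pos, ?_⟩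
  rintro lam R M₁ Mψ V V₁ V₂ ψ hlam rfl hV₁ hV₂ hM₁ hsupp hkato - hψ heq
  obtain ⟨k, hk, hk₁⟩ := exists_kato_bound_of_abs_le (μ := volume) (by simp) hM₁ hsupp
    measure_closedBall_lt_top.ne
  have hc : 4 * (1 / (4 * Real.pi)) * 1 ≤ 1 := by
    rw [mul_one, ← div_eq_mul_one_div, div_mul_cancel_left₀ four_ne_zero]
    exact inv_le_one_of_one_le₀ (by linarith [Real.pi_gt_three])
  set B := 4 * ENNReal.ofReal (1 / (4 * Real.pi)) * k * ENNReal.ofReal (agmonWeight lam R * Mψ)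
  have hB : B ≠ ⊤ := by finiteness
  have hbound := ae_mul_le_of_forall_essSup_min_mul_le fun n : ℕ =>
    essSup_min_agmonWeight_mul_norm_le hlam.le (by positivity) hc hV₁ hV₂ hk₁ hkato hsupp hψ heq
      n.cast_nonneg
  refine ⟨B.toReal + 1, by positivity, ?_⟩
  filter_upwards [hbound] with x hx
  have hw := agmonWeight_pos (lam := lam) (norm_nonneg x)
  calc ‖ψ x‖ ≤ B.toReal * (agmonWeight lam ‖x‖)⁻¹ := by
        rw [← div_eq_mul_inv, le_div_iff₀ hw, mul_comm]
        exact (ENNReal.ofReal_le_iff_le_toReal hB).1 hx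
    _ ≤ (B.toReal + 1) * (agmonWeight lam ‖x‖)⁻¹ := by gcongr; linarith
    _ = (B.toReal + 1) * (1 + ‖x‖)⁻¹ * Real.exp (-lam * ‖x‖) := by
        rw [inv_agmonWeight, mul_assoc]
end
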